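/- arXiv:2603.17345 — 7 statements merged into one kernel-verified Lean document; each statement's English description precedes it below -/
import Mathlib

section
/- Let M = (E, I) be a matroid with nonnegative weight function w and let k be a positive integer. Let F ⊆ E, let X ∈ I with |X| ≤ k, and let x ∈ F ∩ X. Let R be the output of the greedy algorithm that processes the elements of F in non-increasing order of weight and adds an element to the current set whenever independence is preserved and the size stays at most k. Then R contains an element y such that y ∉ X − x, w(y) ≥ w(x), and X − x + y ∈ I. -/
/-!
Follow the greedy run up to the moment `x` is processed, when the current set `I` is
independent and every element of `I` weighs at least `w x`. If `x` is accepted, `y = x` works.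
If it is rejected because `|I| = k ≥ |X|`, augmentation from `I` enlarges `X - x`. If it is
rejected because `I + x` is dependent, then `x ∈ cl(I)` while `x ∉ cl(X - x)`, so some `y ∈ I`
lies outside `cl(X - x)`, and `X - x + y` is independent.
-/

-- `Greedy(M, F, k)`: process the elements of a list (sorted in non-increasing order
-- of weight), adding an element whenever independence in `M` is preserved and the size
-- stays at most `k`.
open Classical in
noncomputable def greedy {α : Type*} [DecidableEq α] (M : Matroid α) (k : ℕ) :
    List α → Finset α → Finset α
  | [], I => I
  | f :: rest, I =>
    if M.Indep (↑(insert f I) : Set α) ∧ (insert f I).card ≤ k then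
      greedy M k rest (insert f I)
    else greedy M k rest I

namespace Matroid

variable {α : Type*} {M : Matroid α}

lemma Indep.exists_insert_sdiff_singleton_of_not_indep_insert {X I : Set α} {x : α}
    (hX : M.Indep X) (hxX : x ∈ X) (hI : M.Indep I) (hdep : ¬ M.Indep (insert x I)) :
    ∃ y ∈ I, y ∉ X \ {x} ∧ M.Indep (insert y (X \ {x})) := by
  have hx_cl_I : x ∈ M.closure I :=
    hI.mem_closure_iff'.mpr ⟨hX.subset_ground hxX, fun h => absurd h hdep⟩
  have hI_not_sub : ¬ I ⊆ M.closure (X \ {x}) := fun h =>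
    hX.notMem_closure_sdiff_of_mem hxX (M.closure_subset_closure_of_subset_closure h hx_cl_I)
  obtain ⟨y, hyI, hy_cl⟩ := Set.not_subset.mp hI_not_sub
  have hyX : y ∉ X \ {x} := fun h =>
    hy_cl (M.subset_closure _ ((hX.sdiff _).subset_ground) h)
  exact ⟨y, hyI, hyX,
    ((hX.sdiff _).insert_indep_iff_of_notMem hyX).mpr ⟨hI.subset_ground hyI, hy_cl⟩⟩

lemma Indep.exists_insert_erase_of_not_greedy_step [DecidableEq α] {k : ℕ} {X I : Finset α}
    {x : α} (hX : M.Indep X) (hXk : X.card ≤ k) (hxX : x ∈ X) (hI : M.Indep I) (hxI : x ∉ I)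
    (hrej : ¬ (M.Indep (↑(insert x I) : Set α) ∧ (insert x I).card ≤ k)) :
    ∃ y ∈ I, y ∉ X.erase x ∧ M.Indep (↑(insert y (X.erase x)) : Set α) := by
  rcases not_and_or.mp hrej with hdep | hcard
  · obtain ⟨y, hyI, hyX, hy⟩ :=
      hX.exists_insert_sdiff_singleton_of_not_indep_insert hxX hI (by simpa using hdep)
    exact ⟨y, hyI, by rwa [← Finset.mem_coe, Finset.coe_erase], by simpa using hy⟩
  · have hlt : (X.erase x).card < I.card := by
      rw [Finset.card_erase_of_mem hxX]
      rw [Finset.card_insert_of_notMem hxI] at hcard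
      have := Finset.card_pos.mpr ⟨x, hxX⟩
      omega
    have hX' : M.Indep (↑(X.erase x) : Set α) := hX.subset (Finset.coe_subset.mpr (X.erase_subset x))
    obtain ⟨y, ⟨hyI, hyX⟩, hy⟩ := hX'.augment hI (by
      rw [Set.encard_coe_eq_coe_finsetCard, Set.encard_coe_eq_coe_finsetCard]
      exact_mod_cast hlt)
    exact ⟨y, hyI, hyX, by simpa using hy⟩

end Matroid

section Greedy

variable {α : Type*} [DecidableEq α] (M : Matroid α) (k : ℕ)

lemma subset_greedy : ∀ (l : List α) (I : Finset α), I ⊆ greedy M k l I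
  | [], I => by simp [greedy]
  | f :: rest, I => by
    rw [greedy]
    split
    · exact (Finset.subset_insert f I).trans (subset_greedy rest _)
    · exact subset_greedy rest I

variable {M k}

lemma exists_exchange_mem_greedy (w : α → ℝ) {X : Finset α} (hX : M.Indep X) (hXk : X.card ≤ k)
    {x : α} (hxX : x ∈ X) {l : List α} (hsort : l.Pairwise (fun a b => w b ≤ w a))
    (hxl : x ∈ l) {I : Finset α} (hI : M.Indep I) (hxI : x ∉ I) (hwI : ∀ a ∈ I, w x ≤ w a) :
    ∃ y ∈ greedy M k l I, y ∉ X.erase x ∧ w x ≤ w y ∧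
      M.Indep (↑(insert y (X.erase x)) : Set α) := by
  induction l generalizing I with
  | nil => simp at hxl
  | cons f rest ih =>
    rw [List.pairwise_cons] at hsort
    rw [greedy]
    by_cases hxf : x = f
    · subst hxf
      split_ifs with hacc
      · refine ⟨x, subset_greedy M k rest _ (Finset.mem_insert_self x I),
          Finset.notMem_erase x X, le_rfl, ?_⟩
        rwa [Finset.insert_erase hxX]
      · obtain ⟨y, hyI, hyX, hy⟩ := hX.exists_insert_erase_of_not_greedy_step hXk hxX hI hxI hacc
        exact ⟨y, subset_greedy M k rest I hyI, hyX, hwI y hyI, hy⟩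
    · have hxr : x ∈ rest := (List.mem_cons.mp hxl).resolve_left hxf
      split_ifs with hacc
      · refine ih hsort.2 hxr hacc.1 (by simp [hxf, hxI]) ?_
        simpa [hsort.1 x hxr] using hwI
      · exact ih hsort.2 hxr hI hxI hwI

end Greedy

theorem stmt_1_general {α : Type*} [DecidableEq α] (M : Matroid α) (w : α → ℝ)
    (k : ℕ)
    (l : List α) (hsort : l.Pairwise (fun a b => w b ≤ w a))
    (X : Finset α) (hX : M.Indep (↑X : Set α)) (hXk : X.card ≤ k)
    (x : α) (hxF : x ∈ l) (hxX : x ∈ X) :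
    ∃ y ∈ greedy M k l ∅, y ∉ X.erase x ∧ w x ≤ w y ∧
      M.Indep (↑(insert y (X.erase x)) : Set α) :=
  exists_exchange_mem_greedy w hX hXk hxX hsort hxF (by simp) (Finset.notMem_empty x) (by simp)

/-- If `X` is independent with `|X| ≤ k` and `x ∈ F ∩ X`, then the output of
the greedy algorithm on `F` contains `y ∉ X − x` with `w(y) ≥ w(x)` and `X − x + y`
independent. The set `F` is given as a duplicate-free list sorted in non-increasing weight
order. -/
theorem stmt_1 {α : Type*} [DecidableEq α] (M : Matroid α) (w : α → ℝ)
    (hw : ∀ e, 0 ≤ w e) (k : ℕ) (hk : 0 < k)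
    (l : List α) (hnd : l.Nodup) (hsort : l.Pairwise (fun a b => w b ≤ w a))
    (X : Finset α) (hX : M.Indep (↑X : Set α)) (hXk : X.card ≤ k)
    (x : α) (hxF : x ∈ l) (hxX : x ∈ X) :
    ∃ y ∈ greedy M k l ∅, y ∉ X.erase x ∧ w x ≤ w y ∧
      M.Indep (↑(insert y (X.erase x)) : Set α) :=
  stmt_1_general M w k l hsort X hX hXk x hxF hxX
end

section
/- Cographic matroids are O(k)-coverable: there is a constant C such that if M is the cographic matroid of a connected graph G = (V, E), then for every independent set X with |X| ≤ k there exists F ⊆ E with |F| ≤ C·k such that span_M(X) = ⋃_{f∈F} span_M(f). -/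
/-!
Let `H = G - X`, which is connected. A non-loop `e ∈ span X \ X` is a bridge of `H`; for a fixed
root `r`, let `A_e` be the side of `e` in `H - e` avoiding `r`, so that only `e` and edges of `X`
cross `A_e`. If the sides of `e` and `f` are crossed by the same edges of `X`, only `e` and `f`
cross `A_e Δ A_f`, so `{e, f}` contains an edge cut and `e, f` are parallel. The sides form a
laminar family, hence so do their traces on the set `T` of the at most `2|X|` endpoints of `X`;
these traces are nonempty because `e` is not a loop, so there are fewer than `2|T|` of them.
Thus `X`, one edge per trace and one loop, at most `5|X| + 1 ≤ 6k` edges in all, have spans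
covering `span X`.
-/

open Set
open scoped Finset

namespace SimpleGraph

variable {V : Type*} (G : SimpleGraph V)

def cut (A : Set V) : Set (Sym2 V) := {e ∈ G.edgeSet | ∃ a ∈ e, ∃ b ∈ e, a ∈ A ∧ b ∉ A}

variable {G} {A B : Set V} {e : Sym2 V}

lemma mk_mem_cut {a b : V} : s(a, b) ∈ G.cut A ↔ G.Adj a b ∧ ¬(a ∈ A ↔ b ∈ A) := by
  simp only [cut, mem_ofPred_eq, mem_edgeSet, Sym2.mem_iff, exists_eq_or_imp, exists_eq_left]
  tauto

lemma nonempty_of_mem_cut (he : e ∈ G.cut A) : A.Nonempty ∧ Aᶜ.Nonempty :=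
  let ⟨_, a, _, b, _, ha, hb⟩ := he
  ⟨⟨a, ha⟩, ⟨b, hb⟩⟩

lemma cut_inter_eq_of_forall_mem_iff {s : Set (Sym2 V)} (h : ∀ e ∈ s, ∀ v ∈ e, v ∈ A ↔ v ∈ B) :
    G.cut A ∩ s = G.cut B ∩ s := by
  ext e
  simp only [mem_inter_iff, and_congr_left_iff]
  intro he
  induction e using Sym2.inductionOn with
  | hf a b =>
    simp only [mk_mem_cut, h _ he a (Sym2.mem_mk_left a b), h _ he b (Sym2.mem_mk_right a b)]

@[simp]
lemma cut_compl : G.cut Aᶜ = G.cut A := by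
  ext e
  induction e using Sym2.inductionOn with
  | hf a b => simp only [mk_mem_cut, mem_compl_iff]; tauto

lemma cut_inter_subset : G.cut (A ∩ B) ⊆ G.cut A ∪ G.cut B := by
  intro e
  induction e using Sym2.inductionOn with
  | hf a b => simp only [mem_union, mk_mem_cut, mem_inter_iff]; tauto

lemma cut_symmDiff : G.cut (symmDiff A B) = symmDiff (G.cut A) (G.cut B) := by
  ext e
  induction e using Sym2.inductionOn with
  | hf a b => simp only [mem_symmDiff, mk_mem_cut]; tauto

@[simp]
lemma cut_deleteEdges (s : Set (Sym2 V)) : (G.deleteEdges s).cut A = G.cut A \ s := by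
  ext e
  simp only [cut, edgeSet_deleteEdges, mem_sdiff, mem_ofPred_eq]
  tauto

lemma connected_iff_cut_nonempty :
    G.Connected ↔ Nonempty V ∧ ∀ A : Set V, A.Nonempty → Aᶜ.Nonempty → (G.cut A).Nonempty := by
  refine ⟨fun hG => ⟨hG.nonempty, fun A ⟨u, hu⟩ ⟨v, hv⟩ => ?_⟩, fun ⟨hV, h⟩ => ?_⟩
  · obtain ⟨d, -, hd, hd'⟩ := (hG.preconnected u v).some.exists_boundary_dart A hu hv
    exact ⟨_, mk_mem_cut.2 ⟨d.adj, fun h => hd' (h.1 hd)⟩⟩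
  · refine (connected_iff G).2 ⟨fun u v => ?_, hV⟩
    by_contra huv
    obtain ⟨e, he⟩ := h {w | G.Reachable u w} ⟨u, .rfl⟩ ⟨v, huv⟩
    induction e using Sym2.inductionOn with
    | hf a b =>
      obtain ⟨hab, hab'⟩ := mk_mem_cut.1 he
      exact hab' ⟨fun ha => ha.trans hab.reachable, fun hb => hb.trans hab.symm.reachable⟩

lemma laminar_of_cut_eq_singleton (hG : G.Connected) {r : V} {f : Sym2 V}
    (hA : G.cut A = {e}) (hB : G.cut B = {f}) (hrA : r ∉ A) (hrB : r ∉ B) :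
    A ⊆ B ∨ B ⊆ A ∨ Disjoint A B := by
  by_contra! h
  obtain ⟨hAB, hBA, hdisj⟩ := h
  obtain ⟨a, haA, haB⟩ := not_subset.1 hAB
  obtain ⟨b, hbB, hbA⟩ := not_subset.1 hBA
  obtain ⟨c, hcA, hcB⟩ := not_disjoint_iff.1 hdisj
  have hcut := (connected_iff_cut_nonempty.1 hG).2
  by_cases hef : e = f
  · obtain ⟨g, hg⟩ := hcut (symmDiff A B) ⟨a, .inl ⟨haA, haB⟩⟩ ⟨r, by simp [hrA, hrB]⟩
    rw [cut_symmDiff, hA, hB, hef, symmDiff_self] at hg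
    exact hg
  -- two edges cannot join the four regions cut out by `A` and `B`
  have region : ∀ D : Set V, G.cut D ⊆ G.cut A ∪ G.cut B → D.Nonempty → Dᶜ.Nonempty →
      e ∈ G.cut D ∨ f ∈ G.cut D := by
    intro D hD hDne hDcne
    obtain ⟨g, hg⟩ := hcut D hDne hDcne
    rcases hD hg with hgA | hgB
    · rw [hA] at hgA; exact .inl (hgA ▸ hg)
    · rw [hB] at hgB; exact .inr (hgB ▸ hg)
  have h1 := region (A ∩ B) cut_inter_subset ⟨c, hcA, hcB⟩ ⟨r, fun h => hrA h.1⟩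
  have h2 := region (A ∩ Bᶜ) (by simpa using cut_inter_subset (A := A) (B := Bᶜ))
    ⟨a, haA, haB⟩ ⟨r, fun h => hrA h.1⟩
  have h3 := region (Aᶜ ∩ B) (by simpa using cut_inter_subset (A := Aᶜ) (B := B))
    ⟨b, hbA, hbB⟩ ⟨r, fun h => hrB h.2⟩
  have h4 := region (Aᶜ ∩ Bᶜ) (by simpa using cut_inter_subset (A := Aᶜ) (B := Bᶜ))
    ⟨r, hrA, hrB⟩ ⟨c, fun h => h.1 hcA⟩
  have heA : e ∈ G.cut A := hA ▸ rfl
  have hfB : f ∈ G.cut B := hB ▸ rfl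
  have heB : e ∉ G.cut B := hB ▸ hef
  have hfA : f ∉ G.cut A := hA ▸ Ne.symm hef
  induction e using Sym2.inductionOn with
  | hf x y =>
  induction f using Sym2.inductionOn with
  | hf z w =>
  have hxy := (mk_mem_cut.1 heA).1
  have hzw := (mk_mem_cut.1 hfB).1
  simp only [mk_mem_cut, hxy, hzw, true_and, mem_inter_iff, mem_compl_iff]
    at h1 h2 h3 h4 heA hfB heB hfA
  grind

end SimpleGraph

namespace Finset

variable {α : Type*}

def IsLaminar (L : Finset (Finset α)) : Prop :=
  ∀ S ∈ L, ∀ S' ∈ L, S ⊆ S' ∨ S' ⊆ S ∨ Disjoint S S'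

lemma IsLaminar.subset {L L' : Finset (Finset α)} (hL : IsLaminar L) (h : L' ⊆ L) :
    IsLaminar L' :=
  fun S hS S' hS' => hL S (h hS) S' (h hS')

variable [DecidableEq α]

/-- If `T ∉ L`, a member `M` of maximal size splits `L` into the members inside `M` and those
inside `T \ M`. -/
lemma IsLaminar.card_le_two_mul_sub_two_of_notMem {T : Finset α} {L : Finset (Finset α)}
    (hL : IsLaminar L) (hLT : ∀ S ∈ L, S.Nonempty ∧ S ⊆ T) (hT : T ∉ L)
    (ih : ∀ T' ⊂ T, ∀ {L' : Finset (Finset α)}, IsLaminar L' →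
      (∀ S ∈ L', S.Nonempty ∧ S ⊆ T') → #L' ≤ 2 * #T' - 1) :
    #L ≤ 2 * #T - 2 := by
  rcases L.eq_empty_or_nonempty with rfl | hLne
  · simp
  obtain ⟨M, hM, hmax⟩ := L.exists_max_image card hLne
  have hMT : M ⊂ T := ssubset_of_subset_of_ne (hLT M hM).2 fun h => hT (h ▸ hM)
  have hcover : L ⊆ L.filter (· ⊆ M) ∪ L.filter (· ⊆ T \ M) := by
    intro S hS
    simp only [mem_union, mem_filter, hS, true_and]
    rcases hL S hS M hM with h | h | h
    · exact .inl h
    · exact .inl (eq_of_subset_of_card_le h (hmax S hS) ▸ subset_rfl)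
    · exact .inr (subset_sdiff.2 ⟨(hLT S hS).2, h⟩)
  have hin := ih M hMT (hL.subset (filter_subset _ _))
    fun S hS => ⟨(hLT S (mem_filter.1 hS).1).1, (mem_filter.1 hS).2⟩
  have hout := ih (T \ M) (sdiff_ssubset hMT.subset (hLT M hM).1) (hL.subset (filter_subset _ _))
    fun S hS => ⟨(hLT S (mem_filter.1 hS).1).1, (mem_filter.1 hS).2⟩
  have hsplit : #(T \ M) + #M = #T := card_sdiff_add_card_eq_card hMT.subset
  have hM₀ : 0 < #M := (hLT M hM).1.card_pos
  have hTM₀ : 0 < #(T \ M) := (sdiff_nonempty.2 hMT.not_subset).card_pos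
  have := (card_le_card hcover).trans (card_union_le _ _)
  omega

theorem IsLaminar.card_le_two_mul_sub_one {T : Finset α} {L : Finset (Finset α)}
    (hL : IsLaminar L) (hLT : ∀ S ∈ L, S.Nonempty ∧ S ⊆ T) : #L ≤ 2 * #T - 1 := by
  induction T using Finset.strongInduction generalizing L with
  | H T ih =>
  by_cases hT : T ∈ L
  · have := (hL.subset (erase_subset T L)).card_le_two_mul_sub_two_of_notMem
      (fun S hS => hLT S (mem_of_mem_erase hS)) (notMem_erase T L) ih
    have := card_erase_add_one hT
    have := (hLT T hT).1.card_pos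
    omega
  · have := hL.card_le_two_mul_sub_two_of_notMem hLT hT ih
    omega

lemma card_biUnion_toFinset_le (X : Finset (Sym2 α)) : #(X.biUnion Sym2.toFinset) ≤ 2 * #X :=
  (card_biUnion_le_card_mul X Sym2.toFinset 2 fun e _ => by
    rw [Sym2.card_toFinset]; split_ifs <;> omega).trans_eq (mul_comm _ _)

end Finset

lemma Set.exists_finset_subset_card_le_of_mapsTo {α β : Type*} {s : Set α} {κ : α → β}
    {L : Finset β} (hκ : MapsTo κ s L) :
    ∃ R : Finset α, ↑R ⊆ s ∧ #R ≤ #L ∧ ∀ e ∈ s, ∃ f ∈ R, κ f = κ e := by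
  obtain ⟨s', hs', hbij⟩ := s.exists_subset_bijOn κ
  have hfin : s'.Finite := by
    refine Finite.of_finite_image ?_ hbij.injOn
    rw [hbij.image_eq]
    exact L.finite_toSet.subset (mapsTo_iff_image_subset.1 hκ)
  refine ⟨hfin.toFinset, by simpa using hs', ?_, fun e he => ?_⟩
  · exact Finset.card_le_card_of_injOn κ (fun e he => hκ (hs' (by simpa using he)))
      (by simpa using hbij.injOn)
  · obtain ⟨f, hf, hfe⟩ := hbij.surjOn (mem_image_of_mem κ he)
    exact ⟨f, by simpa using hf, hfe⟩

namespace Matroid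

variable {α : Type*}

lemma exists_finset_card_le_one_loops (M : Matroid α) :
    ∃ F : Finset α, #F ≤ 1 ∧ ↑F ⊆ M.loops ∧ M.loops ⊆ ⋃ f ∈ F, M.closure {f} := by
  rcases M.loops.eq_empty_or_nonempty with h | ⟨e, he⟩
  · exact ⟨∅, by simp, by simp, by simp [h]⟩
  · exact ⟨{e}, by simp, by simpa using he, by simp [IsLoop.closure he]⟩

variable {V : Type*}

structure IsCographic (M : Matroid (Sym2 V)) (G : SimpleGraph V) : Prop where
  ground_eq : M.E = G.edgeSet
  indep_iff : ∀ F, M.Indep F ↔ F ⊆ G.edgeSet ∧ (G.deleteEdges F).Connected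

namespace IsCographic

variable {M : Matroid (Sym2 V)} {G : SimpleGraph V} {X S : Set (Sym2 V)} {A B : Set V}
  {e f : Sym2 V}

lemma dep_iff [Nonempty V] (hM : M.IsCographic G) :
    M.Dep S ↔ S ⊆ G.edgeSet ∧ ∃ A : Set V, A.Nonempty ∧ Aᶜ.Nonempty ∧ G.cut A ⊆ S := by
  simp only [Dep, hM.indep_iff, hM.ground_eq, SimpleGraph.connected_iff_cut_nonempty,
    SimpleGraph.cut_deleteEdges, sdiff_nonempty, iff_true_intro ‹Nonempty V›, true_and]
  push Not
  tauto

lemma dep_of_cut_subset (hM : M.IsCographic G) (hS : S ⊆ G.edgeSet) (he : e ∈ G.cut A)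
    (hA : G.cut A ⊆ S) : M.Dep S :=
  let ⟨⟨a, _⟩, hAc⟩ := SimpleGraph.nonempty_of_mem_cut he
  have : Nonempty V := ⟨a⟩
  hM.dep_iff.2 ⟨hS, A, ⟨a, ‹_›⟩, hAc, hA⟩

lemma exists_cut_eq_singleton (hM : M.IsCographic G) (hX : M.Indep X)
    (he : e ∈ M.closure X) (heX : e ∉ X) (r : V) :
    ∃ A : Set V, r ∉ A ∧ (G.deleteEdges X).cut A = {e} := by
  have : Nonempty V := ⟨r⟩
  obtain ⟨-, A, hA, hAc, hcut⟩ := hM.dep_iff.1 ((hX.mem_closure_iff_of_notMem heX).1 he)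
  have hH := (SimpleGraph.connected_iff_cut_nonempty.1 ((hM.indep_iff X).1 hX).2).2
  wlog hrA : r ∉ A generalizing A
  · exact this Aᶜ hAc (by simpa using hA) (by simpa using hcut) (by simpa using hrA)
  refine ⟨A, hrA, (Nonempty.subset_singleton_iff (hH A hA hAc)).1 ?_⟩
  rw [SimpleGraph.cut_deleteEdges, sdiff_subset_iff, union_comm, ← insert_eq]
  exact hcut

lemma isLoop_of_cut_subset_singleton (hM : M.IsCographic G) (he : e ∈ G.cut A)
    (hA : G.cut A ⊆ {e}) : M.IsLoop e :=
  singleton_dep.1 (hM.dep_of_cut_subset (singleton_subset_iff.2 he.1) he hA)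

lemma cut_inter_nonempty_of_not_isLoop (hM : M.IsCographic G)
    (hA : (G.deleteEdges X).cut A = {e}) (he : ¬ M.IsLoop e) : (G.cut A ∩ X).Nonempty := by
  rw [SimpleGraph.cut_deleteEdges] at hA
  have heA : e ∈ G.cut A := (hA.symm ▸ mem_singleton e : e ∈ G.cut A \ X).1
  by_contra h
  refine he (hM.isLoop_of_cut_subset_singleton heA fun g hg => hA ▸ ⟨hg, fun hgX => h ⟨g, hg, hgX⟩⟩)

lemma mem_closure_singleton_of_cut_inter_eq (hM : M.IsCographic G)
    (hA : (G.deleteEdges X).cut A = {e}) (hB : (G.deleteEdges X).cut B = {f})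
    (he : ¬ M.IsLoop e) (hAB : G.cut A ∩ X = G.cut B ∩ X) : f ∈ M.closure {e} := by
  rw [SimpleGraph.cut_deleteEdges] at hA hB
  have heA : e ∈ G.cut A \ X := hA.symm ▸ mem_singleton e
  have hfB : f ∈ G.cut B \ X := hB.symm ▸ mem_singleton f
  have hME := hM.ground_eq
  by_cases hfe : f = e
  · exact hfe ▸ M.mem_closure_self e (hME ▸ heA.1.1)
  have hcutA : G.cut A = insert e (G.cut A ∩ X) := by rw [insert_eq, ← hA, sdiff_union_inter]
  have hcutB : G.cut B = insert f (G.cut A ∩ X) := by rw [hAB, insert_eq, ← hB, sdiff_union_inter]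
  have hD : G.cut (symmDiff A B) ⊆ {f, e} := by
    rw [SimpleGraph.cut_symmDiff, hcutA, hcutB]
    intro g
    simp only [mem_symmDiff, mem_insert_iff, mem_inter_iff, mem_singleton_iff]
    tauto
  have heD : e ∈ G.cut (symmDiff A B) := by
    rw [SimpleGraph.cut_symmDiff, hcutA, hcutB]
    simp [mem_symmDiff, Ne.symm hfe, heA.2]
  have hei : M.Indep {e} := by
    by_contra h
    exact he (singleton_dep.1 ((not_indep_iff (by simpa [hME] using heA.1.1)).1 h))
  rw [hei.mem_closure_iff_of_notMem hfe]
  exact hM.dep_of_cut_subset (by simpa [insert_subset_iff] using ⟨hfB.1.1, heA.1.1⟩) heD hD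

theorem exists_finset_cover_closure (hM : M.IsCographic G) (hG : G.Connected)
    {X : Finset (Sym2 V)} (hX : M.Indep X) :
    ∃ R : Finset (Sym2 V), ↑R ⊆ M.closure X ∧ #R ≤ 4 * #X ∧
      ∀ e ∈ M.closure X, e ∉ X → ¬ M.IsLoop e → ∃ f ∈ R, e ∈ M.closure {f} := by
  classical
  obtain ⟨r⟩ := hG.nonempty
  set N := {e | e ∈ M.closure X ∧ e ∉ X ∧ ¬ M.IsLoop e}
  choose! A hrA hA using fun e (he : e ∈ N) => hM.exists_cut_eq_singleton hX he.1 he.2.1 r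
  set T := X.biUnion Sym2.toFinset
  set trace := fun e => T.filter (· ∈ A e)
  set L := T.powerset.filter (· ∈ trace '' N)
  have hLT : ∀ S ∈ L, S.Nonempty ∧ S ⊆ T := by
    simp only [L, Finset.mem_filter, Finset.mem_powerset]
    rintro _ ⟨hST, e, he, rfl⟩
    obtain ⟨x, hxA, hxX⟩ := hM.cut_inter_nonempty_of_not_isLoop (hA e he) he.2.2
    obtain ⟨-, v, hvx, -, -, hv, -⟩ := hxA
    exact ⟨⟨v, Finset.mem_filter.2 ⟨Finset.mem_biUnion.2 ⟨x, hxX, by simpa⟩, hv⟩⟩, hST⟩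
  have hL : L.IsLaminar := by
    simp only [L, Finset.IsLaminar, Finset.mem_filter]
    rintro _ ⟨-, e, he, rfl⟩ _ ⟨-, f, hf, rfl⟩
    have hH := ((hM.indep_iff X).1 hX).2
    rcases SimpleGraph.laminar_of_cut_eq_singleton hH (hA e he) (hA f hf) (hrA e he) (hrA f hf)
      with h | h | h
    · exact .inl (Finset.monotone_filter_right _ fun _ _ hv => h hv)
    · exact .inr (.inl (Finset.monotone_filter_right _ fun _ _ hv => h hv))
    · exact .inr (.inr (Finset.disjoint_left.2 fun v hv hv' =>
        Set.disjoint_left.1 h (Finset.mem_filter.1 hv).2 (Finset.mem_filter.1 hv').2))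
  obtain ⟨R, hRN, hRL, hR⟩ := Set.exists_finset_subset_card_le_of_mapsTo (s := N) (κ := trace)
    (L := L) fun e he => by simpa [L] using ⟨fun v hv => (Finset.mem_filter.1 hv).1, e, he, rfl⟩
  refine ⟨R, fun f hf => (hRN hf).1, ?_, fun e he heX hel => ?_⟩
  · have := hL.card_le_two_mul_sub_one hLT
    have : #T ≤ 2 * #X := Finset.card_biUnion_toFinset_le X
    omega
  obtain ⟨f, hfR, hfe⟩ := hR e ⟨he, heX, hel⟩
  refine ⟨f, hfR, hM.mem_closure_singleton_of_cut_inter_eq (hA f (hRN hfR)) (hA e ⟨he, heX, hel⟩)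
    (hRN hfR).2.2 (SimpleGraph.cut_inter_eq_of_forall_mem_iff fun x hx v hv => ?_)⟩
  have hvT : v ∈ T := Finset.mem_biUnion.2 ⟨x, hx, by simpa⟩
  simpa [trace, hvT] using Finset.ext_iff.1 hfe v

theorem exists_closure_eq_biUnion_closure_singleton (hM : M.IsCographic G) (hG : G.Connected)
    {X : Finset (Sym2 V)} (hX : M.Indep X) :
    ∃ F : Finset (Sym2 V), #F ≤ 5 * #X + 1 ∧ M.closure X = ⋃ f ∈ F, M.closure {f} := by
  classical
  obtain ⟨R, hR, hRcard, hRcover⟩ := hM.exists_finset_cover_closure hG hX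
  obtain ⟨L, hLcard, hL, hLcover⟩ := M.exists_finset_card_le_one_loops
  refine ⟨X ∪ R ∪ L, ?_, subset_antisymm (fun e he => ?_) (iUnion₂_subset fun f hf => ?_)⟩
  · have := Finset.card_union_le (X ∪ R) L
    have := Finset.card_union_le X R
    omega
  · simp only [mem_iUnion, Finset.mem_union, exists_prop]
    by_cases heX : e ∈ X
    · exact ⟨e, .inl (.inl heX), M.mem_closure_self e (M.closure_subset_ground _ he)⟩
    by_cases hel : M.IsLoop e
    · obtain ⟨f, hf, hef⟩ := mem_iUnion₂.1 (hLcover hel)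
      exact ⟨f, .inr hf, hef⟩
    obtain ⟨f, hf, hef⟩ := hRcover e he heX hel
    exact ⟨f, .inl (.inr hf), hef⟩
  · refine M.closure_subset_closure_of_subset_closure (singleton_subset_iff.2 ?_)
    rcases Finset.mem_union.1 hf with hf | hf
    · rcases Finset.mem_union.1 hf with hf | hf
      · exact M.subset_closure X hX.subset_ground hf
      · exact hR hf
    · exact M.closure_subset_closure (empty_subset _) (hL hf)

end IsCographic

end Matroid

/-- Cographic matroids are `O(k)`-coverable: there is a constant `C` such
that for the cographic matroid `M` of any finite connected graph `G` (a set `F` of edges is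
independent iff `G − F` is connected) and every independent `X` with `|X| ≤ k` (`k ≥ 1`),
there is `F` with `|F| ≤ C·k` and `span(X) = ⋃_{f ∈ F} span(f)`. -/
theorem stmt_6 :
    ∃ C : ℕ, ∀ (V : Type) (_ : Fintype V) (G : SimpleGraph V), G.Connected →
      ∀ M : Matroid (Sym2 V), M.E = G.edgeSet →
        (∀ F : Set (Sym2 V), M.Indep F ↔ F ⊆ G.edgeSet ∧ (G.deleteEdges F).Connected) →
        ∀ k : ℕ, 0 < k → ∀ X : Finset (Sym2 V), M.Indep (↑X : Set (Sym2 V)) → X.card ≤ k →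
          ∃ F : Finset (Sym2 V), F.card ≤ C * k ∧
            M.closure (↑X : Set (Sym2 V)) = ⋃ f ∈ F, M.closure {f} := by
  refine ⟨6, fun V _ G hG M hME hMindep k hk X hX hXk => ?_⟩
  obtain ⟨F, hF, hXF⟩ :=
    Matroid.IsCographic.exists_closure_eq_biUnion_closure_singleton ⟨hME, hMindep⟩ hG hX
  exact ⟨F, by omega, hXF⟩
end

section
/- Let M_0, …, M_{d−1} be matroids on a common ground set U where each M_i for i ∈ [d−1] is the transversal matroid of a bipartite graph G_i = (U, W_i; E_i). Define V = {(u, e_1, …, e_{d−1}) : u ∈ U, e_i ∈ δ_{G_i}(u)}, matroid M'_0 on V whose independent sets are those {v_1, …, v_t} with distinct first coordinates forming an independent set of M_0, and for each i ∈ [d−1] the simple partition matroid M'_i on V in which a set is independent iff the i-th coordinate edges pairwise do not share a vertex of W_i. Let F = ⋂ I_i and F' = ⋂ I'_i. Then: (a) for every X' ∈ F', the set of first coordinates {φ_0(x') : x' ∈ X'} lies in F; and (b) for every X ∈ F there exists X' ∈ F' with X = {φ_0(x') : x' ∈ X'}. -/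
section

variable {U : Type*} {m : ℕ} {W : Fin m → Type*}

/-- The ground set `V` of the auxiliary instance: tuples `(u, e₁, …, e_{d−1})` where each
`eᵢ` is an edge of `Gᵢ` incident to `u` (encoded by its `Wᵢ`-endpoint). -/
def TupleGround (adj : ∀ i : Fin m, U → W i → Prop) : Type _ :=
  {p : U × (∀ i : Fin m, W i) // ∀ i : Fin m, adj i p.1 (p.2 i)}

/-- `φ₀` returns the first coordinate of a tuple. -/
def phi0 {adj : ∀ i : Fin m, U → W i → Prop} (v : TupleGround adj) : U := v.1.1

/-- Independence in `M'₀`: distinct first coordinates forming an independent set of `M₀`;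
independence in the simple partition matroid `M'ᵢ`: the `i`-th coordinate edges pairwise do
not share a vertex of `Wᵢ`, i.e. the `Wᵢ`-endpoints are pairwise distinct. -/
def TupleIndep (M0 : Matroid U) (adj : ∀ i : Fin m, U → W i → Prop)
    (S : Set (TupleGround adj)) : Prop :=
  (Set.InjOn phi0 S ∧ M0.Indep (phi0 '' S)) ∧
    ∀ i : Fin m, Set.InjOn (fun v : TupleGround adj => v.1.2 i) S

/-- `M₀` arbitrary and each `Ms i` the transversal matroid of a bipartite
graph `Gᵢ = (U, Wᵢ; Eᵢ)` (a set is independent iff some matching covers it). With `F` the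
common independent sets of `M₀, Ms` and `F'` the common independent sets of the lifted
matroids on tuples: (a) first-coordinate images of members of `F'` lie in `F`; (b) every
member of `F` is the first-coordinate image of some member of `F'`. -/
theorem stmt_10 (M0 : Matroid U) (adj : ∀ i : Fin m, U → W i → Prop)
    (Ms : Fin m → Matroid U)
    (hMs : ∀ i (X : Set U), (Ms i).Indep X ↔
      ∃ f : U → W i, Set.InjOn f X ∧ ∀ u ∈ X, adj i u (f u)) :
    (∀ S : Set (TupleGround adj), TupleIndep M0 adj S →
        (M0.Indep (phi0 '' S) ∧ ∀ i, (Ms i).Indep (phi0 '' S))) ∧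
    (∀ X : Set U, (M0.Indep X ∧ ∀ i, (Ms i).Indep X) →
        ∃ S : Set (TupleGround adj), TupleIndep M0 adj S ∧ X = phi0 '' S) := by
  constructor
  · rintro S ⟨⟨hinj, hM0⟩, hI⟩
    refine ⟨hM0, fun i => ?_⟩
    obtain ⟨f0, -, -⟩ := (hMs i ∅).mp (Ms i).empty_indep
    classical
    refine (hMs i _).mpr ⟨fun u =>
      if h : ∃ v ∈ S, phi0 v = u then h.choose.1.2 i else f0 u, ?_, ?_⟩
    · rintro u ⟨v, hv, rfl⟩ u' ⟨v', hv', rfl⟩ he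
      have h1 : ∃ w ∈ S, phi0 w = phi0 v := ⟨v, hv, rfl⟩
      have h2 : ∃ w ∈ S, phi0 w = phi0 v' := ⟨v', hv', rfl⟩
      simp only [dif_pos h1, dif_pos h2] at he
      have e1 := hI i h1.choose_spec.1 h2.choose_spec.1 he
      rw [← h1.choose_spec.2, ← h2.choose_spec.2, e1]
    · rintro u ⟨v, hv, rfl⟩
      have h1 : ∃ w ∈ S, phi0 w = phi0 v := ⟨v, hv, rfl⟩
      simp only [dif_pos h1]
      have := h1.choose.2 i
      rwa [show h1.choose.1.1 = phi0 v from h1.choose_spec.2] at this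
  · rintro X ⟨hM0, hI⟩
    choose f hfinj hfadj using fun i => (hMs i X).mp (hI i)
    set S : Set (TupleGround adj) :=
      {v | v.1.1 ∈ X ∧ ∀ i, v.1.2 i = f i v.1.1} with hS
    have himg : phi0 '' S = X := by
      apply Set.Subset.antisymm
      · rintro u ⟨v, hv, rfl⟩; exact hv.1
      · intro u hu
        exact ⟨⟨(u, fun i => f i u), fun i => hfadj i u hu⟩, ⟨hu, fun i => rfl⟩, rfl⟩
    have hpinj : Set.InjOn phi0 S := by
      rintro v hv v' hv' he
      apply Subtype.ext
      apply Prod.ext he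
      funext i
      rw [hv.2 i, hv'.2 i]
      exact congrArg (f i) he
    refine ⟨S, ⟨⟨hpinj, himg ▸ hM0⟩, fun i => ?_⟩, himg.symm⟩
    rintro v hv v' hv' he
    simp only [hv.2 i, hv'.2 i] at he
    have : v.1.1 = v'.1.1 := hfinj i hv.1 hv'.1 he
    exact hpinj hv hv' this
end
end

section
/- Let Z be a good disjoint subfamily of a laminar matroid (L, c) with respect to an independent set X and element x ∈ X, such that height(Z) = max{c(A) : A ∈ Z} = 1. Then E(Z) = ⋃_{Z∈Z} Z is an (X, x)-exchangeable set, i.e., x ∈ E(Z) and X − x + y is independent for every y ∈ E(Z). -/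
/-!
Every element `y ∈ E(Z)` lies in some `B ∈ Z`, and `X − x` misses `B`: for `B = Z₀` because
`X ∩ Z₀` already contains `x` and `c Z₀ = 1`, otherwise because `X ∩ (E(Z) \ Z₀) = ∅`. Adding `y`
can only overflow a set `A ∈ L` with `y ∈ A` that is tight for `X − x`. By goodness `B ⊄ A`, so
laminarity forces `A ⊆ B`; then `X − x` misses `A`, and tightness gives `c A = 0`, which is
impossible.
-/

section

open Set

variable {E : Type*}

lemma ncard_diff_singleton_union_inter_le {X A : Set E} {x y : E} {k : ℕ} (hX : X.Finite)
    (hXA : (X ∩ A).ncard ≤ k) (hk : y ∈ A → ((X \ {x}) ∩ A).ncard ≠ k) :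
    (((X \ {x}) ∪ {y}) ∩ A).ncard ≤ k := by
  have hle : ((X \ {x}) ∩ A).ncard ≤ (X ∩ A).ncard :=
    ncard_le_ncard (inter_subset_inter_left A sdiff_subset) (hX.inter_of_left A)
  rw [union_inter_distrib_right]
  by_cases hyA : y ∈ A
  · calc ((X \ {x}) ∩ A ∪ {y} ∩ A).ncard
        ≤ ((X \ {x}) ∩ A).ncard + ({y} ∩ A).ncard := ncard_union_le _ _
      _ ≤ ((X \ {x}) ∩ A).ncard + 1 := by
          gcongr
          exact (ncard_le_ncard inter_subset_left).trans (ncard_singleton y).le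
      _ ≤ k := (hle.trans hXA).lt_of_ne (hk hyA)
  · rw [singleton_inter_eq_empty.mpr hyA, union_empty]
    exact hle.trans hXA

lemma diff_singleton_inter_eq_empty_of_mem {X Z₀ : Set E} {Z : Set (Set E)} {x : E}
    (hX : X.Finite) (hx : x ∈ X) (hZ : Z.Pairwise Disjoint) (hZ₀ : Z₀ ∈ Z) (hxZ₀ : x ∈ Z₀)
    (hXZ₀ : (X ∩ Z₀).ncard ≤ 1) (hXZ : X ∩ (⋃₀ Z \ Z₀) = ∅) {B : Set E} (hB : B ∈ Z) :
    (X \ {x}) ∩ B = ∅ := by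
  refine eq_empty_of_forall_notMem fun z ⟨⟨hzX, hzx⟩, hzB⟩ => ?_
  by_cases hBZ₀ : B = Z₀
  · subst hBZ₀
    exact hzx ((ncard_le_one (hX.inter_of_left B)).mp hXZ₀ z ⟨hzX, hzB⟩ x ⟨hx, hxZ₀⟩)
  · have hzZ₀ : z ∉ Z₀ := disjoint_left.mp (hZ hB hZ₀ hBZ₀) hzB
    exact hXZ.subset ⟨hzX, ⟨B, hB, hzB⟩, hzZ₀⟩

end

theorem stmt_13_general {E : Type*} (L : Set (Set E))
    (hL : ∀ A ∈ L, ∀ B ∈ L, (A ∩ B).Nonempty → A ⊆ B ∨ B ⊆ A)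
    (c : Set E → ℕ)
    (hpos : ∀ A ∈ L, 0 < c A)
    (X : Set E) (hXfin : X.Finite)
    (hX : ∀ A ∈ L, (X ∩ A).ncard ≤ c A)
    (x : E) (hx : x ∈ X)
    (Z : Set (Set E)) (hZL : Z ⊆ L) (hZdisj : Z.Pairwise Disjoint)
    (hheight : ∀ A ∈ Z, c A = 1)
    (hgood1 : ∃ Z0 ∈ Z, x ∈ Z0 ∧ X ∩ (⋃₀ Z \ Z0) = ∅)
    (hgood2 : ∀ A ∈ L, ((X \ {x}) ∩ A).ncard = c A → ∀ B ∈ Z, ¬ B ⊆ A) :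
    x ∈ ⋃₀ Z ∧ ∀ y ∈ ⋃₀ Z, ∀ A ∈ L, (((X \ {x}) ∪ {y}) ∩ A).ncard ≤ c A := by
  obtain ⟨Z₀, hZ₀, hxZ₀, hXZ⟩ := hgood1
  have hXZ₀ : (X ∩ Z₀).ncard ≤ 1 := hheight Z₀ hZ₀ ▸ hX Z₀ (hZL hZ₀)
  refine ⟨⟨Z₀, hZ₀, hxZ₀⟩, fun y ⟨B, hB, hyB⟩ A hA => ?_⟩
  refine ncard_diff_singleton_union_inter_le hXfin (hX A hA) fun hyA htight => ?_
  have hXB := diff_singleton_inter_eq_empty_of_mem hXfin hx hZdisj hZ₀ hxZ₀ hXZ₀ hXZ hB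
  have hAB : A ⊆ B :=
    (hL A hA B (hZL hB) ⟨y, hyA, hyB⟩).resolve_right (hgood2 A hA htight B hB)
  have hXA : (X \ {x}) ∩ A = ∅ :=
    Set.subset_empty_iff.mp (hXB ▸ Set.inter_subset_inter_right _ hAB)
  exact (hpos A hA).ne' (by rw [← htight, hXA, Set.ncard_empty])

/-- Setting: a laminar matroid on `E` given by a laminar family `L`
(containing all singletons with capacity 1, all capacities positive, and capacities monotone
under inclusion) and `c : L → ℕ`. Let `X` be independent, `x ∈ X`, and let `Z ⊆ L` be a
good disjoint subfamily of height 1: all capacities of members of `Z` equal 1, some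
`Z₀ ∈ Z` contains `x` with `X ∩ (E(Z) \ Z₀) = ∅`, and no tight set contains a member of
`Z`. Then `E(Z) = ⋃₀ Z` is an `(X, x)`-exchangeable set: `x ∈ E(Z)` and `X − x + y` is
independent for every `y ∈ E(Z)`. -/
theorem stmt_13 {E : Type*} (L : Set (Set E))
    (hL : ∀ A ∈ L, ∀ B ∈ L, (A ∩ B).Nonempty → A ⊆ B ∨ B ⊆ A)
    (c : Set E → ℕ)
    (hsing : ∀ e : E, ({e} : Set E) ∈ L ∧ c {e} = 1)
    (hpos : ∀ A ∈ L, 0 < c A)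
    (hmono : ∀ A ∈ L, ∀ B ∈ L, A ⊆ B → c A ≤ c B)
    (X : Set E) (hXfin : X.Finite)
    (hX : ∀ A ∈ L, (X ∩ A).ncard ≤ c A)
    (x : E) (hx : x ∈ X)
    (Z : Set (Set E)) (hZL : Z ⊆ L) (hZdisj : Z.Pairwise Disjoint)
    (hheight : ∀ A ∈ Z, c A = 1)
    (hgood1 : ∃ Z0 ∈ Z, x ∈ Z0 ∧ X ∩ (⋃₀ Z \ Z0) = ∅)
    (hgood2 : ∀ A ∈ L, ((X \ {x}) ∩ A).ncard = c A → ∀ B ∈ Z, ¬ B ⊆ A) :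
    x ∈ ⋃₀ Z ∧ ∀ y ∈ ⋃₀ Z, ∀ A ∈ L, (((X \ {x}) ∪ {y}) ∩ A).ncard ≤ c A :=
  stmt_13_general L hL c hpos X hXfin hX x hx Z hZL hZdisj hheight hgood1 hgood2
end

section
/- Let M_0 (rank ≤ k) and a g(k)-coverable matroid M_1 be matroids on E, let X ∈ I_0 ∩ I_1 with |X| ≤ k, and let x ∈ X. Suppose y_1, …, y_{g(k)+1} are elements such that each y_t ∉ X − x, X − x + y_t ∈ I_0, and span_{M_1}(y_t) ≠ span_{M_1}(y_{t'}) for t ≠ t'. Then there exists some t with y_t ∉ span_{M_1}(X − x), and hence X − x + y_t ∈ I_0 ∩ I_1. -/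
/-- Let `M₀` (rank at most `k`) and a loopless `g`-coverable matroid `M₁`
be matroids on `E`, `X` a common independent set with `|X| ≤ k`, `x ∈ X`. If
`y₁, …, y_{g+1}` satisfy `yₜ ∉ X − x`, `X − x + yₜ` independent in `M₀`, and the singleton
spans `span_{M₁}(yₜ)` are pairwise distinct, then some `yₜ` satisfies
`yₜ ∉ span_{M₁}(X − x)`, and hence `X − x + yₜ` is a common independent set. -/
theorem stmt_16 {α : Type*} (M0 M1 : Matroid α)
    (hE0 : M0.E = Set.univ) (hE1 : M1.E = Set.univ)
    (k g : ℕ)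
    (hrank : ∀ S : Set α, M0.Indep S → S.ncard ≤ k)
    (hloop : ∀ e : α, M1.Indep {e})
    (hcover : ∀ S : Set α, M1.Indep S → S.ncard ≤ k →
      ∃ F : Finset α, F.card ≤ g ∧ M1.closure S = ⋃ f ∈ F, M1.closure {f})
    (X : Set α) (hX0 : M0.Indep X) (hX1 : M1.Indep X)
    (hXfin : X.Finite) (hXk : X.ncard ≤ k)
    (x : α) (hx : x ∈ X)
    (y : Fin (g + 1) → α)
    (hynot : ∀ t, y t ∉ X \ {x})
    (hyind : ∀ t, M0.Indep ((X \ {x}) ∪ {y t}))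
    (hyspan : ∀ t t', t ≠ t' → M1.closure {y t} ≠ M1.closure {y t'}) :
    ∃ t, y t ∉ M1.closure (X \ {x}) ∧
      M0.Indep ((X \ {x}) ∪ {y t}) ∧ M1.Indep ((X \ {x}) ∪ {y t}) := by
  have hXx1 : M1.Indep (X \ {x}) := hX1.subset Set.diff_subset
  have hXxk : (X \ {x}).ncard ≤ k :=
    le_trans (Set.ncard_le_ncard Set.diff_subset hXfin) hXk
  obtain ⟨F, hFcard, hFcl⟩ := hcover (X \ {x}) hXx1 hXxk
  -- main claim: some y t is outside the closure
  have key : ∃ t, y t ∉ M1.closure (X \ {x}) := by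
    by_contra h
    push_neg at h
    -- choose for each t an f t ∈ F with y t ∈ closure {f t}
    have hchoice : ∀ t, ∃ f ∈ F, y t ∈ M1.closure {f} := by
      intro t
      have := h t
      rw [hFcl] at this
      simpa using this
    choose f hfF hfy using hchoice
    -- y t not a loop
    have hnl : ∀ t, y t ∉ M1.closure ∅ := by
      intro t ht
      have : M1.Dep {y t} := by
        rw [Matroid.dep_iff]
        refine ⟨fun hi ↦ ?_, by simp [hE1]⟩
        · have := hi.notMem_closure_diff_of_mem (Set.mem_singleton _)
          simp at this
          exact this ht
      exact this.not_indep (hloop (y t))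
    -- y t ∈ closure {f t} implies closure {y t} = closure {f t}
    have hcl : ∀ t, M1.closure {y t} = M1.closure {f t} := by
      intro t
      have hy : y t ∈ M1.closure (insert (f t) ∅) \ M1.closure ∅ := by
        refine ⟨by simpa using hfy t, hnl t⟩
      have hex := Matroid.closure_exchange hy
      apply subset_antisymm
      · rw [← Matroid.closure_closure M1 {f t}]
        apply Matroid.closure_subset_closure
        simpa using hfy t
      · rw [← Matroid.closure_closure M1 {y t}]
        apply Matroid.closure_subset_closure
        simpa using hex.1
    -- pigeonhole: f not injective
    have : ¬ Function.Injective f := by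
      intro hinj
      have := Finset.card_le_card_of_injOn (s := Finset.univ) f (fun t _ ↦ hfF t)
        (fun a _ b _ hab ↦ hinj hab)
      simp at this
      omega
    rw [Function.not_injective_iff] at this
    obtain ⟨t, t', hff, hne⟩ := this
    exact hyspan t t' hne (by rw [hcl t, hcl t', hff])
  obtain ⟨t, ht⟩ := key
  refine ⟨t, ht, hyind t, ?_⟩
  have : M1.Indep (insert (y t) (X \ {x})) := by
    rw [hXx1.insert_indep_iff_of_notMem (hynot t)]
    exact ⟨by simp [hE1], ht⟩
  rwa [Set.union_singleton]
end

section
/- Let E be a finite set, F ⊆ 2^E, w : E → ℝ≥0, k a positive integer, and R ⊆ E. Suppose R satisfies the single-exchange property: for every X ∈ F with |X| ≤ k and every x ∈ X, there exists y ∈ R \ (X − x) with w(y) ≥ w(x) and X − x + y ∈ F. Then R is a deterministic reachable kernel: for every {x_1, …, x_t} ∈ F with t ≤ k, there exist y_1, …, y_t ∈ R such that w(y_i) ≥ w(x_i) and {y_1, …, y_i, x_{i+1}, …, x_t} is a set of size t belonging to F, for every i ∈ {1, …, t}. -/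
open Function Set

private lemma stmt_17_aux {E : Type*} (F : Set (Set E)) (w : E → ℝ)
    (k : ℕ) (R : Set E)
    (hex : ∀ X ∈ F, X.Finite → X.ncard ≤ k → ∀ x ∈ X,
      ∃ y ∈ R \ (X \ {x}), w x ≤ w y ∧ (X \ {x}) ∪ {y} ∈ F)
    (t : ℕ) (ht : t ≤ k) (x : Fin t → E) (hxinj : Function.Injective x)
    (hxF : Set.range x ∈ F) :
    ∀ m, m ≤ t → ∃ y : Fin t → E,
      (∀ j : Fin t, j.val < m → y j ∈ R ∧ w (x j) ≤ w (y j)) ∧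
      ∀ m' ≤ m, Function.Injective (fun j : Fin t => if j.val < m' then y j else x j) ∧
        Set.range (fun j : Fin t => if j.val < m' then y j else x j) ∈ F := by
  intro m
  induction m with
  | zero =>
    intro _
    refine ⟨x, by simp, ?_⟩
    intro m' hm'
    have : (fun j : Fin t => if j.val < m' then x j else x j) = x := by
      funext j; simp
    interval_cases m'
    rw [this]
    exact ⟨hxinj, hxF⟩
  | succ m ih =>
    intro hm1
    obtain ⟨y, hy1, hy2⟩ := ih (Nat.le_of_succ_le hm1)
    have hmt : m < t := hm1
    set i : Fin t := ⟨m, hmt⟩ with hi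
    set g : Fin t → E := fun j : Fin t => if j.val < m then y j else x j with hg
    obtain ⟨hginj, hgF⟩ := hy2 m le_rfl
    have hcard : (Set.range g).ncard = t := by
      rw [← Set.image_univ, Set.ncard_image_of_injective _ hginj]
      simp [Set.ncard_univ]
    have hgi : g i = x i := by simp [hg, hi]
    have hxiX : x i ∈ Set.range g := ⟨i, hgi⟩
    obtain ⟨ym, hymR, hwm, hFm⟩ := hex (Set.range g) hgF (Set.finite_range g)
      (by rw [hcard]; exact ht) (x i) hxiX
    classical
    refine ⟨Function.update y i ym, ?_, ?_⟩
    · intro j hj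
      rcases eq_or_ne j i with rfl | hne
      · rw [Function.update_self]
        exact ⟨hymR.1, hwm⟩
      · rw [Function.update_of_ne hne]
        have : j.val < m := by
          rcases Nat.lt_succ_iff_lt_or_eq.mp hj with h | h
          · exact h
          · exact absurd (Fin.ext h : j = i) hne
        exact hy1 j this
    · intro m' hm'
      rcases Nat.lt_succ_iff_lt_or_eq.mp (Nat.lt_succ_of_le hm') with hlt | rfl
      · have : (fun j : Fin t => if j.val < m' then Function.update y i ym j else x j)
            = fun j : Fin t => if j.val < m' then y j else x j := by
          funext j
          by_cases h : j.val < m'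
          · simp only [h, if_true]
            have hne : j ≠ i := by
              intro h'; subst h'; exact absurd (lt_of_lt_of_le h (Nat.lt_succ_iff.mp hlt)) (lt_irrefl _)
            rw [Function.update_of_ne hne]
          · simp only [h, if_false]
        rw [this]
        exact hy2 m' (Nat.lt_succ_iff.mp hlt)
      · set g' : Fin t → E :=
          fun j : Fin t => if j.val < m + 1 then Function.update y i ym j else x j with hg'
        have hg'i : g' i = ym := by simp [hg', hi]
        have hg'ne : ∀ j : Fin t, j ≠ i → g' j = g j := by
          intro j hne
          simp only [hg', hg]
          by_cases h : j.val < m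
          · simp [h, Nat.lt_succ_of_lt h, Function.update_of_ne hne]
          · have h2 : ¬ j.val < m + 1 := by
              intro h'
              rcases Nat.lt_succ_iff_lt_or_eq.mp h' with h'' | h''
              · exact h h''
              · exact hne (Fin.ext h'')
            simp [h, h2]
        have hgjmem : ∀ j : Fin t, j ≠ i → g j ∈ Set.range g \ {x i} := by
          intro j hne
          refine ⟨⟨j, rfl⟩, ?_⟩
          simp only [Set.mem_singleton_iff]
          rw [← hgi]
          exact fun h => hne (hginj h)
        have hg'inj : Function.Injective g' := by
          intro j1 j2 h
          rcases eq_or_ne j1 i with rfl | h1 <;> rcases eq_or_ne j2 i with rfl | h2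
          · rfl
          · rw [hg'i, hg'ne j2 h2] at h
            have hmem := hgjmem j2 h2
            rw [← h] at hmem
            exact absurd hmem hymR.2
          · rw [hg'i, hg'ne j1 h1] at h
            have hmem := hgjmem j1 h1
            rw [h] at hmem
            exact absurd hmem hymR.2
          · rw [hg'ne j1 h1, hg'ne j2 h2] at h
            exact hginj h
        have hrange : Set.range g' = (Set.range g \ {x i}) ∪ {ym} := by
          ext a
          constructor
          · rintro ⟨j, rfl⟩
            rcases eq_or_ne j i with rfl | hne
            · rw [hg'i]; exact Or.inr rfl
            · rw [hg'ne j hne]; exact Or.inl (hgjmem j hne)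
          · rintro (⟨⟨j, rfl⟩, hne⟩ | ha)
            · have hji : j ≠ i := by
                intro h; subst h; exact hne (by rw [hgi]; rfl)
              exact ⟨j, hg'ne j hji⟩
            · exact ⟨i, by rw [hg'i, ha]⟩
        exact ⟨hg'inj, by rw [hrange]; exact hFm⟩

/-- If `R` satisfies the single-exchange property with respect to a
feasible family `F`, weights `w`, and parameter `k`, then `R` is a deterministic reachable
kernel: for every feasible set `{x₁, …, x_t}` with `t ≤ k` there are `y₁, …, y_t ∈ R` with
`w(yᵢ) ≥ w(xᵢ)` such that for every `i`, the set `{y₁, …, yᵢ, x_{i+1}, …, x_t}` is a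
feasible set of size `t`. -/
theorem stmt_17 {E : Type*} (F : Set (Set E)) (w : E → ℝ) (hw : ∀ e, 0 ≤ w e)
    (k : ℕ) (hk : 0 < k) (R : Set E)
    (hex : ∀ X ∈ F, X.Finite → X.ncard ≤ k → ∀ x ∈ X,
      ∃ y ∈ R \ (X \ {x}), w x ≤ w y ∧ (X \ {x}) ∪ {y} ∈ F) :
    ∀ t : ℕ, t ≤ k → ∀ x : Fin t → E, Function.Injective x → Set.range x ∈ F →
      ∃ y : Fin t → E, (∀ i, y i ∈ R) ∧ (∀ i, w (x i) ≤ w (y i)) ∧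
        ∀ i : Fin t,
          ((y '' {j | j ≤ i}) ∪ (x '' {j | i < j})) ∈ F ∧
          ((y '' {j | j ≤ i}) ∪ (x '' {j | i < j})).ncard = t := by
  intro t ht x hxinj hxF
  obtain ⟨y, hy1, hy2⟩ := stmt_17_aux F w k R hex t ht x hxinj hxF t le_rfl
  refine ⟨y, fun i => (hy1 i i.isLt).1, fun i => (hy1 i i.isLt).2, ?_⟩
  intro i
  obtain ⟨hinj, hF⟩ := hy2 (i.val + 1) i.isLt
  have hset : (y '' {j | j ≤ i}) ∪ (x '' {j | i < j})
      = Set.range (fun j : Fin t => if j.val < i.val + 1 then y j else x j) := by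
    ext a
    simp only [Set.mem_union, Set.mem_image, Set.mem_setOf_eq, Set.mem_range]
    constructor
    · rintro (⟨j, hj, rfl⟩ | ⟨j, hj, rfl⟩)
      · exact ⟨j, by simp [Nat.lt_succ_iff.mpr (Fin.le_iff_val_le_val.mp hj)]⟩
      · have : ¬ j.val < i.val + 1 := by
          have := Fin.lt_iff_val_lt_val.mp hj; omega
        exact ⟨j, by simp [this]⟩
    · rintro ⟨j, rfl⟩
      by_cases h : j.val < i.val + 1
      · exact Or.inl ⟨j, Fin.le_iff_val_le_val.mpr (Nat.lt_succ_iff.mp h), by simp [h]⟩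
      · exact Or.inr ⟨j, Fin.lt_iff_val_lt_val.mpr (by omega), by simp [h]⟩
  rw [hset]
  refine ⟨hF, ?_⟩
  rw [← Set.image_univ, Set.ncard_image_of_injective _ hinj]
  simp [Set.ncard_univ]
end

section
/- Let L be a laminar family on a finite set E and c : L → ℤ≥0. Then I = {S ⊆ E : |S ∩ A| ≤ c(A) for all A ∈ L} is the family of independent sets of a matroid on E. -/
set_option maxHeartbeats 1000000 in
/-- For a laminar family `L` on `E` and capacities `c : L → ℕ`, the family
`I = {S : |S ∩ A| ≤ c(A) for all A ∈ L}` is the family of independent sets of a matroid: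
it contains `∅`, is downward closed, and satisfies the exchange axiom. -/
theorem stmt_19 {E : Type*} [DecidableEq E] (L : Set (Set E))
    (hL : ∀ A ∈ L, ∀ B ∈ L, (A ∩ B).Nonempty → A ⊆ B ∨ B ⊆ A)
    (c : Set E → ℕ) :
    (∀ A ∈ L, ((↑(∅ : Finset E) : Set E) ∩ A).ncard ≤ c A) ∧
    (∀ S T : Finset E, T ⊆ S → (∀ A ∈ L, ((↑S : Set E) ∩ A).ncard ≤ c A) →
      ∀ A ∈ L, ((↑T : Set E) ∩ A).ncard ≤ c A) ∧
    (∀ S T : Finset E, (∀ A ∈ L, ((↑S : Set E) ∩ A).ncard ≤ c A) →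
      (∀ A ∈ L, ((↑T : Set E) ∩ A).ncard ≤ c A) → T.card < S.card →
      ∃ e ∈ S, e ∉ T ∧ ∀ A ∈ L, ((↑(insert e T) : Set E) ∩ A).ncard ≤ c A) := by
  classical
  have ncard_eq : ∀ (F : Finset E) (A : Set E),
      ((↑F : Set E) ∩ A).ncard = (F.filter (· ∈ A)).card := by
    intro F A
    rw [show (↑F : Set E) ∩ A = ↑(F.filter (· ∈ A)) by ext x; simp [and_comm],
      Set.ncard_coe_finset]
  refine ⟨?_, ?_, ?_⟩
  · intro A hA
    simp [ncard_eq]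
  · intro S T hTS hS A hA
    rw [ncard_eq]
    calc (T.filter (· ∈ A)).card ≤ (S.filter (· ∈ A)).card :=
          Finset.card_le_card (Finset.filter_subset_filter _ hTS)
      _ ≤ c A := by rw [← ncard_eq]; exact hS A hA
  · intro S T hS hT hcard
    by_contra hcon
    push_neg at hcon
    -- every e ∈ S \ T lies in a tight set
    have tight : ∀ e, e ∈ S → e ∉ T →
        ∃ B, B ∈ L ∧ e ∈ B ∧ (T.filter (· ∈ B)).card = c B := by
      intro e heS heT
      obtain ⟨A, hA, hlt⟩ := hcon e heS heT
      rw [ncard_eq] at hlt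
      have hTA : (T.filter (· ∈ A)).card ≤ c A := by
        rw [← ncard_eq]; exact hT A hA
      by_cases heA : e ∈ A
      · refine ⟨A, hA, heA, ?_⟩
        have : (insert e T).filter (· ∈ A) = insert e (T.filter (· ∈ A)) := by
          rw [Finset.filter_insert, if_pos heA]
        rw [this, Finset.card_insert_of_notMem (by simp [heT])] at hlt
        omega
      · have : (insert e T).filter (· ∈ A) = T.filter (· ∈ A) := by
          rw [Finset.filter_insert, if_neg heA]
        rw [this] at hlt; omega
    -- pick a tight set with maximal trace on S ∪ T
    have maxpick : ∀ e, e ∈ S → e ∉ T →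
        ∃ B, (B ∈ L ∧ e ∈ B ∧ (T.filter (· ∈ B)).card = c B) ∧
          ∀ B', (B' ∈ L ∧ e ∈ B' ∧ (T.filter (· ∈ B')).card = c B') →
            ((S ∪ T).filter (· ∈ B')).card ≤ ((S ∪ T).filter (· ∈ B)).card := by
      intro e heS heT
      set V : Finset ℕ := (Finset.range ((S ∪ T).card + 1)).filter
        (fun n => ∃ B, (B ∈ L ∧ e ∈ B ∧ (T.filter (· ∈ B)).card = c B) ∧
          ((S ∪ T).filter (· ∈ B)).card = n) with hV
      have hmemV : ∀ B, (B ∈ L ∧ e ∈ B ∧ (T.filter (· ∈ B)).card = c B) →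
          ((S ∪ T).filter (· ∈ B)).card ∈ V := by
        intro B hB
        rw [hV, Finset.mem_filter, Finset.mem_range]
        exact ⟨Nat.lt_succ_of_le (Finset.card_le_card (Finset.filter_subset _ _)),
          B, hB, rfl⟩
      obtain ⟨B₀, hB₀⟩ := tight e heS heT
      have hne : V.Nonempty := ⟨_, hmemV B₀ hB₀⟩
      have hmax := V.max'_mem hne
      obtain ⟨-, B, hB, hBcard⟩ := Finset.mem_filter.mp hmax
      refine ⟨B, hB, fun B' hB' => ?_⟩
      rw [hBcard]
      exact Finset.le_max' V _ (hmemV B' hB')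
    choose A hA hAmax using maxpick
    set tr : Set E → Finset E := fun B => (S ∪ T).filter (· ∈ B) with htr
    -- equal or disjoint traces
    have mono : ∀ e he1 he2 f hf1 hf2, A e he1 he2 ⊆ A f hf1 hf2 →
        tr (A e he1 he2) = tr (A f hf1 hf2) := by
      intro e he1 he2 f hf1 hf2 hsub
      have h1 : tr (A e he1 he2) ⊆ tr (A f hf1 hf2) := by
        intro x hx
        simp only [htr, Finset.mem_filter] at hx ⊢
        exact ⟨hx.1, hsub hx.2⟩
      have h2 : (tr (A f hf1 hf2)).card ≤ (tr (A e he1 he2)).card := by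
        apply hAmax e he1 he2
        exact ⟨(hA f hf1 hf2).1, hsub (hA e he1 he2).2.1, (hA f hf1 hf2).2.2⟩
      exact Finset.eq_of_subset_of_card_le h1 h2
    have eqdisj : ∀ e he1 he2 f hf1 hf2,
        tr (A e he1 he2) = tr (A f hf1 hf2) ∨
        Disjoint (tr (A e he1 he2)) (tr (A f hf1 hf2)) := by
      intro e he1 he2 f hf1 hf2
      by_cases hinter : (A e he1 he2 ∩ A f hf1 hf2).Nonempty
      · rcases hL _ (hA e he1 he2).1 _ (hA f hf1 hf2).1 hinter with h | h
        · exact Or.inl (mono _ _ _ _ _ _ h)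
        · exact Or.inl (mono _ _ _ _ _ _ h).symm
      · refine Or.inr (Finset.disjoint_left.mpr ?_)
        intro x hx hx'
        rw [htr, Finset.mem_filter] at hx hx'
        exact hinter ⟨x, hx.2, hx'.2⟩
    -- the family of traces
    set f : {a // a ∈ S \ T} → Finset E := fun x =>
      tr (A x.1 (Finset.mem_sdiff.mp x.2).1 (Finset.mem_sdiff.mp x.2).2) with hf
    set R : Finset (Finset E) := (S \ T).attach.image f with hR
    have hdisjR : ∀ X ∈ R, ∀ Y ∈ R, X ≠ Y → Disjoint X Y := by
      intro X hX Y hY hXY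
      rw [hR, Finset.mem_image] at hX hY
      obtain ⟨x, -, rfl⟩ := hX
      obtain ⟨y, -, rfl⟩ := hY
      rcases eqdisj x.1 _ _ y.1 _ _ with h | h
      · exact absurd h hXY
      · exact h
    have key : ∀ X ∈ R, (S ∩ X).card ≤ (T ∩ X).card := by
      intro X hX
      rw [hR, Finset.mem_image] at hX
      obtain ⟨x, -, rfl⟩ := hX
      set B := A x.1 (Finset.mem_sdiff.mp x.2).1 (Finset.mem_sdiff.mp x.2).2 with hB
      have hSint : S ∩ tr B = S.filter (· ∈ B) := by
        ext a
        simp only [htr, Finset.mem_inter, Finset.mem_filter, Finset.mem_union]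
        tauto
      have hTint : T ∩ tr B = T.filter (· ∈ B) := by
        ext a
        simp only [htr, Finset.mem_inter, Finset.mem_filter, Finset.mem_union]
        tauto
      rw [hSint, hTint, (hA x.1 _ _).2.2, ← ncard_eq]
      exact hS B (hA x.1 _ _).1
    set U : Finset E := R.biUnion id with hU
    have hSTU : S \ T ⊆ U := by
      intro e he
      rw [hU, Finset.mem_biUnion]
      refine ⟨f ⟨e, he⟩, Finset.mem_image_of_mem f (Finset.mem_attach _ _), ?_⟩
      show e ∈ f ⟨e, he⟩
      simp only [hf, htr, Finset.mem_filter, Finset.mem_union]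
      exact ⟨Or.inl (Finset.mem_sdiff.mp he).1, (hA e _ _).2.1⟩
    clear_value tr f R U
    clear hf htr
    have hSU : (S ∩ U).card = ∑ X ∈ R, (S ∩ X).card := by
      rw [show S ∩ U = R.biUnion (fun X => S ∩ X) by
        ext a; simp only [hU, Finset.mem_inter, Finset.mem_biUnion, id_eq]; tauto]
      exact Finset.card_biUnion (fun X hX Y hY hXY =>
        Finset.disjoint_of_subset_left Finset.inter_subset_right
          ((hdisjR X hX Y hY hXY).mono_right Finset.inter_subset_right))
    have hTU : (T ∩ U).card = ∑ X ∈ R, (T ∩ X).card := by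
      rw [show T ∩ U = R.biUnion (fun X => T ∩ X) by
        ext a; simp only [hU, Finset.mem_inter, Finset.mem_biUnion, id_eq]; tauto]
      exact Finset.card_biUnion (fun X hX Y hY hXY =>
        Finset.disjoint_of_subset_left Finset.inter_subset_right
          ((hdisjR X hX Y hY hXY).mono_right Finset.inter_subset_right))
    have hsd : S \ U ⊆ T \ U := by
      intro a ha
      rw [Finset.mem_sdiff] at *
      refine ⟨?_, ha.2⟩
      by_contra haT
      exact ha.2 (hSTU (Finset.mem_sdiff.mpr ⟨ha.1, haT⟩))
    have hfinal : S.card ≤ T.card := by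
      calc S.card = (S ∩ U).card + (S \ U).card :=
            (Finset.card_inter_add_card_sdiff S U).symm
        _ ≤ (T ∩ U).card + (T \ U).card := by
            rw [hSU, hTU]
            exact Nat.add_le_add (Finset.sum_le_sum key) (Finset.card_le_card hsd)
        _ = T.card := Finset.card_inter_add_card_sdiff T U
    omega
end
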